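/- arXiv:1810.08884 — 6 statements merged into one kernel-verified Lean document; each statement's English description precedes it below -/
import Mathlib

section
/- Let (W,S) be a Coxeter system, let u ∈ W, and let w₁ and w₂ be two reduced words for the same element v ∈ W. Then the diagrammatic R̃-polynomials agree: 𝓡_{u,w₁}(t) = 𝓡_{u,w₂}(t). In particular 𝓡_{u,w}(t) for a reduced word w of v depends only on u and v. -/
open Polynomial

variable {B W : Type*} [Group W] {M : CoxeterMatrix B}

open scoped Classical in
/-- The diagrammatic R̃-polynomial, defined by recursion on the word read from its last letter.
`dRAux cs ws u` where `ws` is the reversed word. -/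
noncomputable def dRAux (cs : CoxeterSystem M W) : List B → W → Polynomial ℕ
  | [], u => if u = 1 then 1 else 0
  | s :: rest, u =>
      if cs.length (u * cs.simple s) < cs.length u then
        dRAux cs rest (u * cs.simple s)
      else
        dRAux cs rest (u * cs.simple s) + Polynomial.X * dRAux cs rest u

/-- The diagrammatic R̃-polynomial `𝓡_{u,w}(t) ∈ ℕ[t]`. -/
noncomputable def dR (cs : CoxeterSystem M W) (u : W) (w : List B) : Polynomial ℕ :=
  dRAux cs w.reverse u

/-- `w` is a reduced word for `v`. -/
def IsReducedWordFor (cs : CoxeterSystem M W) (w : List B) (v : W) : Prop :=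
  cs.wordProd w = v ∧ w.length = cs.length v

/-- Bruhat order via the subword property. -/
def BruhatLE (cs : CoxeterSystem M W) (u v : W) : Prop :=
  ∃ w w' : List B, IsReducedWordFor cs w v ∧ List.Sublist w' w ∧ IsReducedWordFor cs w' u

namespace DRWellDef

open CoxeterSystem
open scoped Classical

variable (cs : CoxeterSystem M W)

noncomputable def sigmaFun (i : B) : W × ZMod 2 → W × ZMod 2 :=
  fun p => (cs.simple i * p.1 * cs.simple i, p.2 + if p.1 = cs.simple i then 1 else 0)

lemma simple_conj_eq_iff (i : B) (t : W) :
    cs.simple i * t * cs.simple i = cs.simple i ↔ t = cs.simple i := by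
  constructor
  · intro h
    have := congrArg (fun x => cs.simple i * x * cs.simple i) h
    simpa [mul_assoc, cs.simple_mul_simple_cancel_left, cs.simple_mul_simple_self] using this
  · rintro rfl
    rw [cs.simple_mul_simple_cancel_right]

lemma sigmaFun_involutive (i : B) : Function.Involutive (sigmaFun cs i) := by
  rintro ⟨t, ε⟩
  simp only [sigmaFun]
  refine Prod.ext ?_ ?_
  · show cs.simple i * (cs.simple i * t * cs.simple i) * cs.simple i = t
    simp [mul_assoc, cs.simple_mul_simple_cancel_left, cs.simple_mul_simple_self]
  · show ε + (if t = cs.simple i then 1 else 0)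
        + (if cs.simple i * t * cs.simple i = cs.simple i then 1 else 0) = ε
    rw [if_congr (simple_conj_eq_iff cs i t) rfl rfl]
    have h11 : (1 + 1 : ZMod 2) = 0 := by decide
    by_cases h : t = cs.simple i <;> simp [h, add_assoc, h11]

noncomputable def sigma (i : B) : Equiv.Perm (W × ZMod 2) :=
  (sigmaFun_involutive cs i).toPerm

@[simp] lemma sigma_apply (i : B) (p : W × ZMod 2) : sigma cs i p = sigmaFun cs i p := rfl

lemma key_conj (i j : B) (l : ℕ) :
    (cs.simple i * cs.simple j)⁻¹ * (cs.simple j * (cs.simple i * cs.simple j) ^ l)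
        * (cs.simple i * cs.simple j)
      = cs.simple j * (cs.simple i * cs.simple j) ^ (l + 2) := by
  set c := cs.simple i * cs.simple j with hc
  have h1 : c⁻¹ * cs.simple j = cs.simple j * c := by
    rw [hc, mul_inv_rev, cs.inv_simple, cs.inv_simple, mul_assoc]
  calc c⁻¹ * (cs.simple j * c ^ l) * c
      = ((c⁻¹ * cs.simple j) * c ^ l) * c := by rw [mul_assoc c⁻¹ (cs.simple j) (c ^ l)]
    _ = ((cs.simple j * c) * c ^ l) * c := by rw [h1]
    _ = (cs.simple j * (c * c ^ l)) * c := by rw [mul_assoc (cs.simple j) c (c ^ l)]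
    _ = (cs.simple j * c ^ (l + 1)) * c := by rw [← pow_succ']
    _ = cs.simple j * (c ^ (l + 1) * c) := by rw [mul_assoc (cs.simple j) (c ^ (l + 1)) c]
    _ = cs.simple j * c ^ (l + 2) := by rw [← pow_succ]

lemma pow_sigma_mul (i j : B) (k : ℕ) (t : W) (ε : ZMod 2) :
    ((sigma cs i * sigma cs j) ^ k) (t, ε) =
      ((cs.simple i * cs.simple j) ^ k * t * ((cs.simple i * cs.simple j) ^ k)⁻¹,
        ε + ∑ l ∈ Finset.range (2 * k),
          if t = cs.simple j * (cs.simple i * cs.simple j) ^ l then (1 : ZMod 2) else 0) := by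
  induction k generalizing t ε with
  | zero => simp
  | succ k ih =>
    set c := cs.simple i * cs.simple j with hc
    have hmul : (sigma cs i * sigma cs j) (t, ε)
        = (c * t * c⁻¹,
            ε + ((if t = cs.simple j * c ^ 0 then (1 : ZMod 2) else 0)
              + (if t = cs.simple j * c ^ 1 then (1 : ZMod 2) else 0))) := by
      show sigma cs i (sigma cs j (t, ε)) = _
      simp only [sigma_apply, sigmaFun]
      refine Prod.ext ?_ ?_
      · show cs.simple i * (cs.simple j * t * cs.simple j) * cs.simple i = _
        rw [hc, mul_inv_rev, cs.inv_simple, cs.inv_simple]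
        group
      · show ε + (if t = cs.simple j then 1 else 0)
            + (if cs.simple j * t * cs.simple j = cs.simple i then 1 else 0) = _
        have e1 : (cs.simple j * t * cs.simple j = cs.simple i)
            ↔ (t = cs.simple j * c ^ 1) := by
          rw [pow_one, hc]
          constructor
          · intro h
            have := congrArg (fun x => cs.simple j * x * cs.simple j) h
            rw [show cs.simple j * (cs.simple j * t * cs.simple j) * cs.simple j = t by
              simp [mul_assoc, cs.simple_mul_simple_cancel_left,
                cs.simple_mul_simple_self]] at this
            rw [this]
            rw [show cs.simple j * cs.simple i * cs.simple j
              = cs.simple j * (cs.simple i * cs.simple j) by rw [mul_assoc]]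
          · rintro rfl
            calc cs.simple j * (cs.simple j * (cs.simple i * cs.simple j)) * cs.simple j
                = cs.simple i * cs.simple j * cs.simple j := by
                  rw [cs.simple_mul_simple_cancel_left]
              _ = cs.simple i := cs.simple_mul_simple_cancel_right j
        have e0 : (t = cs.simple j) ↔ (t = cs.simple j * c ^ 0) := by
          rw [pow_zero, mul_one]
        rw [if_congr e1 rfl rfl, if_congr e0 rfl rfl, add_assoc]
    rw [pow_succ, Equiv.Perm.mul_apply, hmul, ih]
    refine Prod.ext ?_ ?_
    · show c ^ k * (c * t * c⁻¹) * (c ^ k)⁻¹ = c ^ (k + 1) * t * (c ^ (k + 1))⁻¹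
      rw [pow_succ']
      group
    · show ε + ((if t = cs.simple j * c ^ 0 then (1:ZMod 2) else 0)
          + (if t = cs.simple j * c ^ 1 then (1:ZMod 2) else 0))
          + ∑ l ∈ Finset.range (2 * k),
            (if c * t * c⁻¹ = cs.simple j * c ^ l then (1:ZMod 2) else 0)
        = ε + ∑ l ∈ Finset.range (2 * (k + 1)),
            (if t = cs.simple j * c ^ l then (1:ZMod 2) else 0)
      have e2 : ∀ l : ℕ, (c * t * c⁻¹ = cs.simple j * c ^ l)
          ↔ (t = cs.simple j * c ^ (l + 2)) := by
        intro l
        constructor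
        · intro h
          have := congrArg (fun x => c⁻¹ * x * c) h
          rw [show c⁻¹ * (c * t * c⁻¹) * c = t by group] at this
          rw [this, key_conj cs i j l]
        · rintro rfl
          rw [← key_conj cs i j l]
          simp [hc, mul_assoc, cs.simple_mul_simple_cancel_left]
      have hsum : ∑ l ∈ Finset.range (2 * k),
            (if c * t * c⁻¹ = cs.simple j * c ^ l then (1:ZMod 2) else 0)
          = ∑ l ∈ Finset.range (2 * k),
            (if t = cs.simple j * c ^ (l + 2) then (1:ZMod 2) else 0) := by
        refine Finset.sum_congr rfl fun l _ => ?_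
        rw [if_congr (e2 l) rfl rfl]
      rw [hsum]
      rw [show 2 * (k + 1) = (2 * k + 1) + 1 by ring, Finset.sum_range_succ',
        Finset.sum_range_succ']
      simp only [Nat.zero_add]
      have halign : (∑ l ∈ Finset.range (2 * k),
            if t = cs.simple j * c ^ (l + 1 + 1) then (1:ZMod 2) else 0)
          = ∑ l ∈ Finset.range (2 * k),
            if t = cs.simple j * c ^ (l + 2) then (1:ZMod 2) else 0 := by
        refine Finset.sum_congr rfl fun l _ => ?_
        norm_num
      rw [halign]
      abel

lemma sigma_liftable : CoxeterMatrix.IsLiftable M (sigma cs) := by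
  intro i j
  apply Equiv.ext
  rintro ⟨t, ε⟩
  rw [pow_sigma_mul]
  have hc : (cs.simple i * cs.simple j) ^ M i j = 1 := cs.simple_mul_simple_pow i j
  rw [hc]
  refine Prod.ext ?_ ?_
  · show 1 * t * 1⁻¹ = t
    simp
  · show ε + ∑ l ∈ Finset.range (2 * M i j),
        (if t = cs.simple j * (cs.simple i * cs.simple j) ^ l then (1:ZMod 2) else 0) = ε
    have hper : ∀ l : ℕ,
        (if t = cs.simple j * (cs.simple i * cs.simple j) ^ (M i j + l) then (1:ZMod 2) else 0)
        = (if t = cs.simple j * (cs.simple i * cs.simple j) ^ l then (1:ZMod 2) else 0) := by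
      intro l
      have : (cs.simple i * cs.simple j) ^ (M i j + l)
          = (cs.simple i * cs.simple j) ^ l := by
        rw [pow_add, hc, one_mul]
      rw [this]
    have : ∑ l ∈ Finset.range (2 * M i j),
        (if t = cs.simple j * (cs.simple i * cs.simple j) ^ l then (1:ZMod 2) else 0) = 0 := by
      rw [two_mul, Finset.sum_range_add]
      simp only [hper]
      have h2 : ∀ x : ZMod 2, x + x = 0 := by decide
      rw [← Finset.sum_add_distrib]
      simp [h2]
    rw [this, add_zero]

/-- The sign homomorphism `W →* Perm (W × ZMod 2)`. -/
noncomputable def phi : W →* Equiv.Perm (W × ZMod 2) :=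
  cs.lift ⟨fun i => sigma cs i, sigma_liftable cs⟩

lemma phi_simple (i : B) : phi cs (cs.simple i) = sigma cs i :=
  cs.lift_apply_simple (sigma_liftable cs) i

/-- The sign cocycle. -/
noncomputable def sg (w t : W) : ZMod 2 := ((phi cs w) (t, (0 : ZMod 2))).2

lemma phi_apply : ∀ w t : W, ∀ ε : ZMod 2,
    phi cs w (t, ε) = (w * t * w⁻¹, ε + sg cs w t) := by
  have key : ∀ w : W, ∀ t : W, ∀ ε : ZMod 2,
      phi cs w (t, ε) = (w * t * w⁻¹, ε + ((phi cs w) (t, 0)).2) := by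
    intro w
    refine cs.simple_induction_left
      (p := fun w => ∀ (t : W) (ε : ZMod 2),
        phi cs w (t, ε) = (w * t * w⁻¹, ε + ((phi cs w) (t, 0)).2)) w ?_ ?_
    · intro t ε
      simp [map_one]
    · intro w i ih
      intro t ε
      have hmm : ∀ ε : ZMod 2, phi cs (cs.simple i * w) (t, ε) = sigma cs i (phi cs w (t, ε)) := by
        intro ε
        rw [map_mul, phi_simple, Equiv.Perm.mul_apply]
      rw [hmm, hmm, ih t ε, ih t 0]
      simp only [sigma_apply, sigmaFun]
      refine Prod.ext ?_ ?_
      · show cs.simple i * (w * t * w⁻¹) * cs.simple i = (cs.simple i * w) * t * (cs.simple i * w)⁻¹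
        rw [mul_inv_rev, cs.inv_simple]
        simp [mul_assoc]
      · dsimp only
        abel
  intro w t ε
  rw [key w t ε]
  rfl

lemma sg_one (t : W) : sg cs 1 t = 0 := by simp [sg, map_one]

lemma sg_mul (u v t : W) : sg cs (u * v) t = sg cs v t + sg cs u (v * t * v⁻¹) := by
  have : phi cs (u * v) (t, 0) = phi cs u (phi cs v (t, 0)) := by
    rw [map_mul, Equiv.Perm.mul_apply]
  rw [sg, this, phi_apply cs v t 0, phi_apply cs u (v * t * v⁻¹) (0 + sg cs v t)]
  show 0 + sg cs v t + sg cs u (v * t * v⁻¹) = sg cs v t + sg cs u (v * t * v⁻¹)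
  rw [zero_add]

lemma sg_simple (i : B) (t : W) : sg cs (cs.simple i) t = if t = cs.simple i then 1 else 0 := by
  rw [sg, phi_simple]
  show (sigmaFun cs i (t, 0)).2 = _
  simp [sigmaFun]

lemma zmod2_cases : ∀ x : ZMod 2, x = 0 ∨ x = 1 := by decide

lemma sg_inv_conj (w t : W) : sg cs w⁻¹ (w * t * w⁻¹) = sg cs w t := by
  have h := sg_mul cs w⁻¹ w t
  rw [inv_mul_cancel, sg_one] at h
  have : ∀ x y : ZMod 2, 0 = x + y → y = x := by decide
  exact this _ _ h

lemma sg_refl_self (t : W) (ht : cs.IsReflection t) : sg cs t t = 1 := by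
  obtain ⟨x, i, rfl⟩ := ht
  have e2 : x⁻¹ * (x * cs.simple i * x⁻¹) * (x⁻¹)⁻¹ = cs.simple i := by
    simp [mul_assoc]
  have e1 : (cs.simple i * x⁻¹) * (x * cs.simple i * x⁻¹) * (cs.simple i * x⁻¹)⁻¹
      = cs.simple i := by
    rw [mul_inv_rev, inv_inv, cs.inv_simple]
    calc cs.simple i * x⁻¹ * (x * cs.simple i * x⁻¹) * (x * cs.simple i)
        = cs.simple i * (x⁻¹ * x) * (cs.simple i * ((x⁻¹ * x) * cs.simple i)) := by
          simp only [mul_assoc]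
      _ = cs.simple i * (cs.simple i * cs.simple i) := by simp
      _ = cs.simple i := by rw [cs.simple_mul_simple_self, mul_one]
  have h0 := sg_mul cs x (cs.simple i * x⁻¹) (x * cs.simple i * x⁻¹)
  rw [show x * (cs.simple i * x⁻¹) = x * cs.simple i * x⁻¹ from (mul_assoc _ _ _).symm] at h0
  rw [e1] at h0
  have h2 := sg_mul cs (cs.simple i) x⁻¹ (x * cs.simple i * x⁻¹)
  rw [e2, sg_simple, if_pos rfl] at h2
  have h3 : sg cs x⁻¹ (x * cs.simple i * x⁻¹) = sg cs x (cs.simple i) :=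
    sg_inv_conj cs x (cs.simple i)
  rw [h0, h2, h3]
  have : ∀ a : ZMod 2, a + 1 + a = 1 := by decide
  exact this _

lemma length_mul_lt_of_sg_eq_one :
    ∀ n : ℕ, ∀ w t : W, cs.length w = n → cs.IsReflection t → sg cs w t = 1 →
      cs.length (w * t) < cs.length w := by
  intro n
  induction n using Nat.strong_induction_on with
  | _ n ih =>
    intro w t hw ht hsg
    rcases eq_or_ne w 1 with rfl | hne
    · rw [sg_one] at hsg
      exact absurd hsg (by decide)
    · obtain ⟨i, hi⟩ := cs.exists_rightDescent_of_ne_one hne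
      rw [CoxeterSystem.IsRightDescent] at hi
      by_cases hti : t = cs.simple i
      · rw [hti]; exact hi
      · have hw' : (w * cs.simple i) * cs.simple i = w := cs.simple_mul_simple_cancel_right i
        have hsg2 : sg cs ((w * cs.simple i) * cs.simple i) t = 1 := by rw [hw']; exact hsg
        rw [sg_mul, sg_simple, if_neg hti, zero_add, cs.inv_simple] at hsg2
        have ht' : cs.IsReflection (cs.simple i * t * cs.simple i) := by
          have := CoxeterSystem.IsReflection.conj ht (cs.simple i)
          rwa [cs.inv_simple] at this
        have hlt : cs.length (w * cs.simple i) < n := hw ▸ hi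
        have hrec := ih (cs.length (w * cs.simple i)) hlt (w * cs.simple i)
          (cs.simple i * t * cs.simple i) rfl ht' hsg2
        have hwt : (w * cs.simple i) * (cs.simple i * t * cs.simple i) * cs.simple i = w * t := by
          simp [mul_assoc, cs.simple_mul_simple_cancel_left]
        have hle : cs.length ((w * cs.simple i) * (cs.simple i * t * cs.simple i) * cs.simple i)
            ≤ cs.length ((w * cs.simple i) * (cs.simple i * t * cs.simple i)) + 1 := by
          have := cs.length_mul_le
            ((w * cs.simple i) * (cs.simple i * t * cs.simple i)) (cs.simple i)
          rwa [cs.length_simple] at this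
        rw [hwt] at hle
        rw [hw] at *
        omega

lemma sg_eq_one_of_length_mul_lt (w t : W) (ht : cs.IsReflection t)
    (h : cs.length (w * t) < cs.length w) : sg cs w t = 1 := by
  rcases zmod2_cases (sg cs w t) with h0 | h1
  · exfalso
    have hsg : sg cs (w * t) t = 1 := by
      rw [sg_mul]
      have : t * t * t⁻¹ = t := by rw [ht.mul_self, one_mul, ht.inv]
      rw [this, sg_refl_self cs t ht, h0, add_zero]
    have := length_mul_lt_of_sg_eq_one cs (cs.length (w * t)) (w * t) t rfl ht hsg
    rw [mul_assoc, ht.mul_self, mul_one] at this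
    omega
  · exact h1

lemma sg_eq_zero_of_length_mul_gt (w t : W) (ht : cs.IsReflection t)
    (h : ¬ cs.length (w * t) < cs.length w) : sg cs w t = 0 := by
  rcases zmod2_cases (sg cs w t) with h0 | h1
  · exact h0
  · exact absurd (length_mul_lt_of_sg_eq_one cs (cs.length w) w t rfl ht h1) h

/-- Square lemma A. -/
lemma square_lemma_A (i j : B) (u : W)
    (hut : ¬ cs.length (u * cs.simple j) < cs.length u)
    (hsut : cs.length (cs.simple i * u * cs.simple j) < cs.length (cs.simple i * u)) :
    cs.simple i * u = u * cs.simple j := by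
  have h1 : sg cs (cs.simple i * u) (cs.simple j) = 1 :=
    sg_eq_one_of_length_mul_lt cs _ _ (cs.isReflection_simple j) hsut
  have h2 : sg cs u (cs.simple j) = 0 :=
    sg_eq_zero_of_length_mul_gt cs _ _ (cs.isReflection_simple j) hut
  rw [sg_mul, h2, zero_add, sg_simple] at h1
  by_cases hc : u * cs.simple j * u⁻¹ = cs.simple i
  · exact (mul_inv_eq_iff_eq_mul.mp hc).symm
  · rw [if_neg hc] at h1
    exact absurd h1 (by decide)

/-- Square lemma B. -/
lemma square_lemma_B (i j : B) (u : W)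
    (hut : cs.length (u * cs.simple j) < cs.length u)
    (hsut : ¬ cs.length (cs.simple i * u * cs.simple j) < cs.length (cs.simple i * u)) :
    cs.simple i * u = u * cs.simple j := by
  have h1 : sg cs (cs.simple i * u) (cs.simple j) = 0 :=
    sg_eq_zero_of_length_mul_gt cs _ _ (cs.isReflection_simple j) hsut
  have h2 : sg cs u (cs.simple j) = 1 :=
    sg_eq_one_of_length_mul_lt cs _ _ (cs.isReflection_simple j) hut
  rw [sg_mul, h2, sg_simple] at h1
  by_cases hc : u * cs.simple j * u⁻¹ = cs.simple i
  · exact (mul_inv_eq_iff_eq_mul.mp hc).symm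
  · rw [if_neg hc] at h1
    exact absurd h1 (by decide)


/-! ### The one-sided Demazure-type operators and their commutation -/

/-- Right operator: matches the recursion of `dRAux`. -/
noncomputable def Rop (j : B) (f : W → Polynomial ℕ) : W → Polynomial ℕ := fun u =>
  if cs.length (u * cs.simple j) < cs.length u then f (u * cs.simple j)
  else f (u * cs.simple j) + Polynomial.X * f u

/-- Left operator. -/
noncomputable def Lop (i : B) (f : W → Polynomial ℕ) : W → Polynomial ℕ := fun u =>
  if cs.length (cs.simple i * u) < cs.length u then f (cs.simple i * u)
  else f (cs.simple i * u) + Polynomial.X * f u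

lemma Lop_Rop_comm (i : B) (j : B) (f : W → Polynomial ℕ) :
    Lop cs i (Rop cs j f) = Rop cs j (Lop cs i f) := by
  funext u
  have h1 := cs.length_simple_mul u i
  have h3 := cs.length_mul_simple u j
  have h2 := cs.length_mul_simple (cs.simple i * u) j
  have h4 := cs.length_simple_mul (u * cs.simple j) i
  rw [← mul_assoc] at h4
  simp only [Lop, Rop]
  rw [show cs.simple i * (u * cs.simple j) = cs.simple i * u * cs.simple j
    from (mul_assoc _ _ _).symm]
  split_ifs <;>
  first
    | omega
    | ring1
    | (have ha1 : ¬ cs.length (u * cs.simple j) < cs.length u := by omega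
       have ha2 : cs.length (cs.simple i * u * cs.simple j)
           < cs.length (cs.simple i * u) := by omega
       have heq := square_lemma_A cs i j u ha1 ha2
       rw [congrArg f heq] <;> ring1)
    | (have hb1 : cs.length (u * cs.simple j) < cs.length u := by omega
       have hb2 : ¬ cs.length (cs.simple i * u * cs.simple j)
           < cs.length (cs.simple i * u) := by omega
       have heq := square_lemma_B cs i j u hb1 hb2
       rw [congrArg f heq] <;> ring1)

/-! ### Chains of operators -/

noncomputable def chainR : List B → (W → Polynomial ℕ) → (W → Polynomial ℕ)
  | [], f => f
  | j :: l, f => Rop cs j (chainR l f)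

noncomputable def chainL : List B → (W → Polynomial ℕ) → (W → Polynomial ℕ)
  | [], f => f
  | i :: l, f => Lop cs i (chainL l f)

lemma chainL_Rop (l : List B) (j : B) (f : W → Polynomial ℕ) :
    chainL cs l (Rop cs j f) = Rop cs j (chainL cs l f) := by
  induction l with
  | nil => rfl
  | cons i l ih =>
    show Lop cs i (chainL cs l (Rop cs j f)) = Rop cs j (Lop cs i (chainL cs l f))
    rw [ih, Lop_Rop_comm]

lemma chainL_chainR (m l : List B) (f : W → Polynomial ℕ) :
    chainL cs m (chainR cs l f) = chainR cs l (chainL cs m f) := by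
  induction l with
  | nil => rfl
  | cons j l ih =>
    show chainL cs m (Rop cs j (chainR cs l f)) = Rop cs j (chainR cs l (chainL cs m f))
    rw [chainL_Rop, ih]

/-! ### Delta functions -/

/-- The indicator function of `x`. -/
noncomputable def delta (x : W) : W → Polynomial ℕ := fun u => if u = x then 1 else 0

lemma Rop_delta (j : B) (x : W) (h : cs.length (x * cs.simple j) < cs.length x) :
    Rop cs j (delta x) = delta (x * cs.simple j) := by
  funext u
  simp only [Rop, delta]
  by_cases h1 : u = x
  · subst h1
    rw [if_pos h]
    have hne : u * cs.simple j ≠ u := fun hh => by rw [hh] at h; omega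
    rw [if_neg hne, if_neg fun hh => hne hh.symm]
  · by_cases h2 : u = x * cs.simple j
    · subst h2
      have hcond : ¬ cs.length ((x * cs.simple j) * cs.simple j) < cs.length (x * cs.simple j) := by
        rw [cs.simple_mul_simple_cancel_right]
        omega
      rw [if_neg hcond, cs.simple_mul_simple_cancel_right, if_pos rfl, if_pos rfl]
      have hne : x * cs.simple j ≠ x := fun hh => by rw [hh] at h; omega
      rw [if_neg hne]
      ring
    · have e1 : u * cs.simple j ≠ x := by
        intro hh
        apply h2
        rw [← hh, cs.simple_mul_simple_cancel_right]
      rw [if_neg e1, if_neg h1, if_neg h2]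
      split_ifs <;> ring

lemma Lop_delta (i : B) (x : W) (h : cs.length (cs.simple i * x) < cs.length x) :
    Lop cs i (delta x) = delta (cs.simple i * x) := by
  funext u
  simp only [Lop, delta]
  by_cases h1 : u = x
  · subst h1
    rw [if_pos h]
    have hne : cs.simple i * u ≠ u := fun hh => by rw [hh] at h; omega
    rw [if_neg hne, if_neg fun hh => hne hh.symm]
  · by_cases h2 : u = cs.simple i * x
    · subst h2
      have hcond : ¬ cs.length (cs.simple i * (cs.simple i * x)) < cs.length (cs.simple i * x) := by
        rw [cs.simple_mul_simple_cancel_left]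
        omega
      rw [if_neg hcond, cs.simple_mul_simple_cancel_left, if_pos rfl, if_pos rfl]
      have hne : cs.simple i * x ≠ x := fun hh => by rw [hh] at h; omega
      rw [if_neg hne]
      ring
    · have e1 : cs.simple i * u ≠ x := by
        intro hh
        apply h2
        rw [← hh, cs.simple_mul_simple_cancel_left]
      rw [if_neg e1, if_neg h1, if_neg h2]
      split_ifs <;> ring

/-! ### Clean chain computations -/

lemma chainR_delta (l : List B) (z : W)
    (H : cs.length (z * (cs.wordProd l)⁻¹) + l.length = cs.length z) :
    chainR cs l (delta z) = delta (z * (cs.wordProd l)⁻¹) := by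
  induction l with
  | nil =>
    show delta z = _
    rw [CoxeterSystem.wordProd_nil, inv_one, mul_one]
  | cons a l ih =>
    have hq : z * (cs.wordProd (a :: l))⁻¹ = (z * (cs.wordProd l)⁻¹) * cs.simple a := by
      rw [cs.wordProd_cons, mul_inv_rev, cs.inv_simple, ← mul_assoc]
    rw [hq] at H
    simp only [List.length_cons] at H
    have hlen1 : cs.length (cs.wordProd l) ≤ l.length := cs.length_wordProd_le l
    have hlen2 : cs.length ((cs.wordProd l)⁻¹) = cs.length (cs.wordProd l) :=
      cs.length_inv _
    have hge := cs.length_mul_ge_length_sub_length z ((cs.wordProd l)⁻¹)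
    have hstep := cs.length_mul_simple (z * (cs.wordProd l)⁻¹) a
    have hH' : cs.length (z * (cs.wordProd l)⁻¹) + l.length = cs.length z := by omega
    have hdesc : cs.length ((z * (cs.wordProd l)⁻¹) * cs.simple a)
        < cs.length (z * (cs.wordProd l)⁻¹) := by omega
    show Rop cs a (chainR cs l (delta z)) = _
    rw [ih hH', Rop_delta cs a _ hdesc, hq]

lemma chainL_delta (l : List B) (z : W)
    (H : cs.length (cs.wordProd l * z) + l.length = cs.length z) :
    chainL cs l (delta z) = delta (cs.wordProd l * z) := by
  induction l with
  | nil =>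
    show delta z = _
    rw [CoxeterSystem.wordProd_nil, one_mul]
  | cons a l ih =>
    have hq : cs.wordProd (a :: l) * z = cs.simple a * (cs.wordProd l * z) := by
      rw [cs.wordProd_cons, mul_assoc]
    rw [hq] at H
    simp only [List.length_cons] at H
    have hlen1 : cs.length (cs.wordProd l) ≤ l.length := cs.length_wordProd_le l
    have hge := cs.length_mul_ge_length_sub_length' (cs.wordProd l) z
    have hstep := cs.length_simple_mul (cs.wordProd l * z) a
    have hH' : cs.length (cs.wordProd l * z) + l.length = cs.length z := by omega
    have hdesc : cs.length (cs.simple a * (cs.wordProd l * z))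
        < cs.length (cs.wordProd l * z) := by omega
    show Lop cs a (chainL cs l (delta z)) = _
    rw [ih hH', Lop_delta cs a _ hdesc, hq]


/-! ### Link with `dRAux` -/

lemma dRAux_eq_chainR (l : List B) : dRAux cs l = chainR cs l (delta 1) := by
  induction l with
  | nil =>
    funext u
    rfl
  | cons a l ih =>
    funext u
    show dRAux cs (a :: l) u = Rop cs a (chainR cs l (delta 1)) u
    rw [← ih]
    simp only [dRAux, Rop]

/-- The central well-definedness statement. -/
lemma chain_eq (v : W) (w w₂ : List B)
    (hw : cs.wordProd w = v) (hlw : w.length = cs.length v)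
    (hw2 : cs.wordProd w₂ = v) (hlw2 : w₂.length = cs.length v) :
    dRAux cs w.reverse = chainL cs w₂ (delta 1) := by
  rw [dRAux_eq_chainR cs w.reverse]
  have hA : chainL cs w₂ (delta (v⁻¹ : W)) = delta (1 : W) := by
    have H : cs.length (cs.wordProd w₂ * v⁻¹) + w₂.length = cs.length (v⁻¹ : W) := by
      rw [hw2, mul_inv_cancel, cs.length_one, cs.length_inv, hlw2, zero_add]
    have := chainL_delta cs w₂ (v⁻¹ : W) H
    rwa [hw2, mul_inv_cancel] at this
  have hB : chainR cs w.reverse (delta (v⁻¹ : W)) = delta (1 : W) := by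
    have hrev : cs.wordProd w.reverse = v⁻¹ := by rw [cs.wordProd_reverse, hw]
    have H : cs.length ((v⁻¹ : W) * (cs.wordProd w.reverse)⁻¹) + w.reverse.length
        = cs.length (v⁻¹ : W) := by
      rw [hrev, inv_inv, inv_mul_cancel, cs.length_one, List.length_reverse, hlw,
        cs.length_inv, zero_add]
    have := chainR_delta cs w.reverse (v⁻¹ : W) H
    rwa [hrev, inv_inv, inv_mul_cancel] at this
  calc chainR cs w.reverse (delta 1)
      = chainR cs w.reverse (chainL cs w₂ (delta (v⁻¹ : W))) := by rw [hA]
    _ = chainL cs w₂ (chainR cs w.reverse (delta (v⁻¹ : W))) :=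
        (chainL_chainR cs w₂ w.reverse _).symm
    _ = chainL cs w₂ (delta 1) := by rw [hB]

end DRWellDef

/-- If `w₁` and `w₂` are two reduced words for the same element `v`, then the diagrammatic
R̃-polynomials agree: `𝓡_{u,w₁}(t) = 𝓡_{u,w₂}(t)`. -/
theorem dR_eq_of_isReducedWordFor (cs : CoxeterSystem M W) (u v : W) (w₁ w₂ : List B)
    (h₁ : IsReducedWordFor cs w₁ v) (h₂ : IsReducedWordFor cs w₂ v) :
    dR cs u w₁ = dR cs u w₂ := by
  obtain ⟨hp1, hl1⟩ := h₁
  obtain ⟨hp2, hl2⟩ := h₂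
  have r1 := DRWellDef.chain_eq cs v w₁ w₂ hp1 hl1 hp2 hl2
  have r2 := DRWellDef.chain_eq cs v w₂ w₂ hp2 hl2 hp2 hl2
  show dRAux cs w₁.reverse u = dRAux cs w₂.reverse u
  rw [r1, r2]
end

section
/- Let (W,S) be a Coxeter system, let u, v ∈ W, and let w be a reduced word for v. Then 𝓡_{u,w}(t) ≠ 0 if and only if u ≤ v in the Bruhat order. -/
open Polynomial

variable {B W : Type*} [Group W] {M : CoxeterMatrix B}

/-!
Unwinding the recursion, `𝓡_{u,w} ≠ 0` exactly when some subword of `w` is a reduced word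
for `u`, for an arbitrary word `w`: there is no cancellation in `ℕ[t]`, and the set of such `u`
is closed under `u ↦ ut` for right inversions `t` by the strong exchange property.
It remains to see that for reduced words this set depends only on `v`. Both are identified with
the interval below `v` for the chain order generated by `x < xt` (`t` a reflection,
`ℓ(x) < ℓ(xt)`): chains descend to subwords by strong exchange, and subwords give chains by
induction on the word, using the lifting property `x ≤ y → xs ≤ y ∨ xs ≤ ys`.
Strong exchange comes from Tits' sign cocycle `W → {±1}^W`, obtained by lifting the simple
reflections to a semidirect product.
-/

open Relation

theorem pow_mul_pow_mul_mul_inv_pow {G : Type*} [Group G] {a g : G} (h : a * g⁻¹ = g * a)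
    (j k : ℕ) : g ^ k * (g ^ j * a) * (g ^ k)⁻¹ = g ^ (2 * k + j) * a := by
  calc g ^ k * (g ^ j * a) * (g ^ k)⁻¹ = g ^ k * g ^ j * (a * g⁻¹ ^ k) := by group
    _ = g ^ (2 * k + j) * a := by rw [(SemiconjBy.pow_right h k).eq]; group

noncomputable def mulAutArrowConj : W →* MulAut (W → ℤˣ) :=
  mulAutArrow.comp (ConjAct.toConjAct : W ≃* ConjAct W).toMonoidHom

theorem mulAutArrowConj_apply (x : W) (f : W → ℤˣ) (t : W) :
    mulAutArrowConj x f t = f (x⁻¹ * t * x) := by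
  change f ((ConjAct.toConjAct x)⁻¹ • t) = _
  rw [ConjAct.smul_def]
  simp

open scoped Classical in
theorem mulAutArrowConj_mulSingle (x t : W) (e : ℤˣ) :
    mulAutArrowConj x (Pi.mulSingle t e) = Pi.mulSingle (x * t * x⁻¹) e := by
  funext u
  simp only [mulAutArrowConj_apply, Pi.mulSingle_apply]
  congr 1
  exact propext ⟨fun h => by rw [← h]; group, fun h => by rw [h]; group⟩

theorem Polynomial.add_X_mul_eq_zero_iff {R : Type*} [Semiring R] [Subsingleton (AddUnits R)]
    {p q : R[X]} : p + X * q = 0 ↔ p = 0 ∧ q = 0 := by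
  refine ⟨fun h => ?_, fun h => by simp [h]⟩
  have hpq : p = 0 ∧ X * q = 0 := by
    simpa only [Polynomial.ext_iff, coeff_add, coeff_zero, add_eq_zero, forall_and] using h
  refine ⟨hpq.1, Polynomial.ext fun n => ?_⟩
  simpa using congr(coeff $(hpq.2) (n + 1))

namespace CoxeterSystem

variable (cs : CoxeterSystem M W)

local prefix:100 "ℓ" => cs.length
local prefix:100 "π" => cs.wordProd
local prefix:100 "s" => cs.simple
local prefix:100 "lis " => cs.leftInvSeq
local prefix:100 "ris " => cs.rightInvSeq

open scoped Classical in
noncomputable def inversionSignGen (i : B) : (W → ℤˣ) ⋊[mulAutArrowConj] W :=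
  ⟨Pi.mulSingle (s i) (-1), s i⟩

open scoped Classical in
theorem isLiftable_inversionSignGen : M.IsLiftable cs.inversionSignGen := by
  intro i i'
  have hconj : s i * (s i * s i')⁻¹ = s i * s i' * s i := by
    simp [mul_assoc, cs.inv_simple]
  have hconj₀ (k : ℕ) :
      (s i * s i') ^ k * s i * ((s i * s i') ^ k)⁻¹ = (s i * s i') ^ (2 * k) * s i := by
    simpa using pow_mul_pow_mul_mul_inv_pow hconj 0 k
  have hconj₁ (k : ℕ) : (s i * s i') ^ k * (s i * s i' * (s i)⁻¹) * ((s i * s i') ^ k)⁻¹ =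
      (s i * s i') ^ (2 * k + 1) * s i := by
    simpa [cs.inv_simple] using pow_mul_pow_mul_mul_inv_pow hconj 1 k
  have hpow (k : ℕ) : (cs.inversionSignGen i * cs.inversionSignGen i') ^ k =
      ⟨∏ j ∈ Finset.range (2 * k), Pi.mulSingle ((s i * s i') ^ j * s i) (-1),
        (s i * s i') ^ k⟩ := by
    induction k with
    | zero => ext1 <;> simp
    | succ k ih =>
      rw [pow_succ, ih]
      ext1
      · simp only [inversionSignGen, SemidirectProduct.mul_left, map_mul,
          mulAutArrowConj_mulSingle, Finset.prod_range_succ, Nat.mul_succ]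
        rw [hconj₀, hconj₁, mul_assoc]
      · exact (pow_succ _ k).symm
  rw [hpow, cs.simple_mul_simple_pow]
  ext1
  · -- each reflection `(s i * s i') ^ j * s i` occurs twice in the product
    have hperiodic (j : ℕ) : (s i * s i') ^ (M i i' + j) = (s i * s i') ^ j := by
      rw [pow_add, cs.simple_mul_simple_pow, one_mul]
    funext t
    simp only [two_mul, Finset.prod_range_add, hperiodic, Pi.mul_apply, Int.units_mul_self]
    rfl
  · rfl

noncomputable def inversionSignHom : W →* (W → ℤˣ) ⋊[mulAutArrowConj] W :=
  cs.lift ⟨_, cs.isLiftable_inversionSignGen⟩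

theorem inversionSignHom_right (w : W) : (cs.inversionSignHom w).right = w := by
  change (SemidirectProduct.rightHom.comp cs.inversionSignHom) w = MonoidHom.id W w
  congr 1
  exact cs.ext_simple fun i => by
    simp [inversionSignHom, cs.lift_apply_simple, inversionSignGen]

/-- Tits' cocycle: its value at `t` is `-1` raised to the number of occurrences of `t` in the
left inversion sequence of any word for `w`. -/
noncomputable def inversionSign (w : W) : W → ℤˣ := (cs.inversionSignHom w).left

theorem inversionSign_mul (x y t : W) :
    cs.inversionSign (x * y) t = cs.inversionSign x t * cs.inversionSign y (x⁻¹ * t * x) := by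
  simp [inversionSign, mulAutArrowConj_apply, inversionSignHom_right]

theorem inversionSign_one : cs.inversionSign 1 = 1 := by
  simp [inversionSign]

open scoped Classical in
theorem inversionSign_simple (i : B) : cs.inversionSign (s i) = Pi.mulSingle (s i) (-1) := by
  simp [inversionSign, inversionSignHom, cs.lift_apply_simple, inversionSignGen]

theorem inversionSign_inv (x t : W) :
    cs.inversionSign x⁻¹ (x⁻¹ * t * x) = (cs.inversionSign x t)⁻¹ := by
  rw [eq_inv_iff_mul_eq_one, mul_comm, ← inversionSign_mul, mul_inv_cancel, inversionSign_one]
  rfl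

theorem inversionSign_self {t : W} (ht : cs.IsReflection t) : cs.inversionSign t t = -1 := by
  obtain ⟨w, i, rfl⟩ := ht
  classical
  have h₁ : (w * s i)⁻¹ * (w * s i * w⁻¹) * (w * s i) = w⁻¹ * (w * s i * w⁻¹) * w := by group
  have h₂ : w⁻¹ * (w * s i * w⁻¹) * w = s i := by group
  rw [inversionSign_mul, inversionSign_mul, h₁, inversionSign_inv, h₂, inversionSign_simple]
  simp [mul_comm]

theorem mem_leftInvSeq_of_inversionSign_ne_one (ω : List B) {t : W}
    (h : cs.inversionSign (π ω) t ≠ 1) : t ∈ lis ω := by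
  induction ω generalizing t with
  | nil => simp [inversionSign_one] at h
  | cons i ω ih =>
    classical
    rw [wordProd_cons, inversionSign_mul, inversionSign_simple] at h
    by_cases hti : t = s i
    · simp [leftInvSeq, hti]
    · simp only [Pi.mulSingle_apply, hti, if_false, one_mul] at h
      refine List.mem_cons_of_mem _ (List.mem_map.mpr ⟨_, ih h, ?_⟩)
      simp [MulAut.conj_apply, mul_assoc, cs.inv_simple]

theorem inversionSign_eq_neg_one {w t : W} (h : cs.IsLeftInversion w t) :
    cs.inversionSign w t = -1 := by
  obtain ⟨ht, hlt⟩ := h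
  by_contra hne
  -- otherwise `t` would be a left inversion of `t * w`, which is longer than `w`
  have htw : cs.inversionSign (t * w) t ≠ 1 := by
    rw [inversionSign_mul, inv_mul_cancel, one_mul, (Int.units_eq_one_or _).resolve_right hne,
      inversionSign_self cs ht]
    decide
  obtain ⟨ω, hω, htwω⟩ := cs.exists_isReduced (t * w)
  rw [htwω] at htw
  have hlen := (cs.isLeftInversion_of_mem_leftInvSeq hω
    (cs.mem_leftInvSeq_of_inversionSign_ne_one ω htw)).2
  rw [← htwω, ← mul_assoc, ht.mul_self, one_mul] at hlen
  omega

theorem mem_leftInvSeq_of_isLeftInversion {ω : List B} {t : W}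
    (h : cs.IsLeftInversion (π ω) t) : t ∈ lis ω :=
  cs.mem_leftInvSeq_of_inversionSign_ne_one ω (by rw [cs.inversionSign_eq_neg_one h]; decide)

theorem mem_rightInvSeq_of_isRightInversion {ω : List B} {t : W}
    (h : cs.IsRightInversion (π ω) t) : t ∈ ris ω := by
  rw [← cs.isLeftInversion_inv_iff, ← wordProd_reverse] at h
  simpa [leftInvSeq_reverse] using cs.mem_leftInvSeq_of_isLeftInversion h

theorem exists_wordProd_eraseIdx_eq_mul {ω : List B} {t : W}
    (h : cs.IsRightInversion (π ω) t) : ∃ j < ω.length, π (ω.eraseIdx j) = π ω * t := by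
  obtain ⟨j, hj, rfl⟩ := List.mem_iff_getElem.mp (cs.mem_rightInvSeq_of_isRightInversion h)
  refine ⟨j, by simpa using hj, ?_⟩
  rw [← wordProd_mul_getD_rightInvSeq, List.getD_eq_getElem _ _ hj]

def HasReducedSubword (ω : List B) (u : W) : Prop :=
  ∃ z : List B, z.Sublist ω ∧ IsReducedWordFor cs z u

theorem hasReducedSubword_nil_iff {u : W} : cs.HasReducedSubword [] u ↔ u = 1 := by
  refine ⟨fun ⟨z, hz, hzu, _⟩ => ?_, fun hu => ⟨[], .slnil, by simp [IsReducedWordFor, hu]⟩⟩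
  rw [← hzu, List.sublist_nil.mp hz, wordProd_nil]

theorem hasReducedSubword_append_singleton_iff {ω : List B} {i : B} {u : W} :
    cs.HasReducedSubword (ω ++ [i]) u ↔
      cs.HasReducedSubword ω u ∨ (cs.HasReducedSubword ω (u * s i) ∧ cs.IsRightDescent u i) := by
  have hu := cs.length_mul_simple u i
  constructor
  · rintro ⟨_, hsub, hzu, hzl⟩
    obtain ⟨z, z', rfl, hz, hz'⟩ := List.sublist_append_iff.mp hsub
    rcases List.sublist_singleton.mp hz' with rfl | rfl
    · exact .inl ⟨z, hz, by simpa using hzu, by simpa using hzl⟩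
    · have hzu' : π z = u * s i := by
        rw [← hzu, wordProd_append, wordProd_singleton, simple_mul_simple_cancel_right]
      have hlen := hzu' ▸ cs.length_wordProd_le z
      simp only [List.length_append, List.length_singleton] at hzl
      exact .inr ⟨⟨z, hz, hzu', by omega⟩, by rw [IsRightDescent]; omega⟩
  · rintro (⟨z, hz, hzu⟩ | ⟨⟨z, hz, hzu, hzl⟩, hi⟩)
    · exact ⟨z, hz.trans (List.sublist_append_left ω [i]), hzu⟩
    · refine ⟨z ++ [i], hz.append (.refl [i]), ?_, ?_⟩
      · rw [wordProd_append, wordProd_singleton, hzu, simple_mul_simple_cancel_right]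
      · rw [IsRightDescent] at hi
        simp only [List.length_append, List.length_singleton]
        omega

theorem hasReducedSubword_wordProd (ω : List B) : cs.HasReducedSubword ω (π ω) := by
  induction ω using List.reverseRecOn with
  | nil => exact (cs.hasReducedSubword_nil_iff).mpr rfl
  | append_singleton ω i ih =>
    rw [wordProd_append, wordProd_singleton, hasReducedSubword_append_singleton_iff,
      simple_mul_simple_cancel_right]
    by_cases hi : cs.IsRightDescent (π ω) i
    · obtain ⟨z, hz, hzω, hzl⟩ := ih
      obtain ⟨j, hj, hzj⟩ := cs.exists_wordProd_eraseIdx_eq_mul (ω := z) (t := s i)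
        (hzω ▸ (cs.isRightInversion_simple_iff_isRightDescent _ i).mpr hi)
      refine .inl ⟨z.eraseIdx j, (List.eraseIdx_sublist z j).trans hz, by rw [hzj, hzω], ?_⟩
      have := List.length_eraseIdx_add_one hj
      have := cs.length_mul_simple (π ω) i
      rw [IsRightDescent] at hi
      omega
    · exact .inr ⟨ih, cs.isRightDescent_iff_not_isRightDescent_mul.mpr
        (by rwa [simple_mul_simple_cancel_right])⟩

variable {cs} in
theorem HasReducedSubword.mul_of_isRightInversion {ω : List B} {u t : W}
    (h : cs.HasReducedSubword ω u) (ht : cs.IsRightInversion u t) :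
    cs.HasReducedSubword ω (u * t) := by
  obtain ⟨z, hz, rfl, -⟩ := h
  obtain ⟨j, -, hzj⟩ := cs.exists_wordProd_eraseIdx_eq_mul ht
  obtain ⟨z', hz', hz'u⟩ := cs.hasReducedSubword_wordProd (z.eraseIdx j)
  exact ⟨z', hz'.trans ((List.eraseIdx_sublist z j).trans hz), hzj ▸ hz'u⟩

theorem dR_nil_ne_zero_iff {u : W} : dR cs u [] ≠ 0 ↔ u = 1 := by
  by_cases hu : u = 1 <;> simp [dR, dRAux, hu]

theorem dR_append_singleton_of_isRightDescent {ω : List B} {i : B} {u : W}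
    (h : cs.IsRightDescent u i) : dR cs u (ω ++ [i]) = dR cs (u * s i) ω := by
  simp only [dR, List.reverse_append, List.reverse_singleton, List.singleton_append, dRAux]
  exact if_pos h

theorem dR_append_singleton_of_not_isRightDescent {ω : List B} {i : B} {u : W}
    (h : ¬cs.IsRightDescent u i) :
    dR cs u (ω ++ [i]) = dR cs (u * s i) ω + X * dR cs u ω := by
  simp only [dR, List.reverse_append, List.reverse_singleton, List.singleton_append, dRAux]
  exact if_neg h

theorem dR_ne_zero_iff_hasReducedSubword (ω : List B) (u : W) :
    dR cs u ω ≠ 0 ↔ cs.HasReducedSubword ω u := by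
  induction ω using List.reverseRecOn generalizing u with
  | nil => rw [dR_nil_ne_zero_iff, hasReducedSubword_nil_iff]
  | append_singleton ω i ih =>
    rw [hasReducedSubword_append_singleton_iff]
    by_cases hi : cs.IsRightDescent u i
    · rw [dR_append_singleton_of_isRightDescent cs hi, ih, and_iff_left hi, or_iff_right_of_imp]
      exact fun h => h.mul_of_isRightInversion
        ((cs.isRightInversion_simple_iff_isRightDescent u i).mpr hi)
    · have hi' : cs.IsRightDescent (u * s i) i :=
        cs.isRightDescent_iff_not_isRightDescent_mul.mpr (by rwa [simple_mul_simple_cancel_right])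
      rw [dR_append_singleton_of_not_isRightDescent cs hi, Ne, add_X_mul_eq_zero_iff, not_and_or,
        ← Ne, ← Ne, ih, ih, iff_false_intro hi, and_false, or_false, or_iff_right_of_imp]
      intro h
      simpa [simple_mul_simple_cancel_right] using
        h.mul_of_isRightInversion ((cs.isRightInversion_simple_iff_isRightDescent _ i).mpr hi')

def BruhatStep (x y : W) : Prop := ∃ t, cs.IsReflection t ∧ y = x * t ∧ ℓ x < ℓ y

theorem hasReducedSubword_of_reflTransGen {u v : W} (h : ReflTransGen cs.BruhatStep u v)
    {ω : List B} (hω : IsReducedWordFor cs ω v) : cs.HasReducedSubword ω u := by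
  induction h using ReflTransGen.head_induction_on with
  | refl => exact ⟨ω, .refl ω, hω⟩
  | head hstep _ ih =>
    obtain ⟨t, ht, rfl, hlt⟩ := hstep
    simpa [mul_assoc, ht.mul_self] using
      ih.mul_of_isRightInversion ⟨ht, by rwa [mul_assoc, ht.mul_self, mul_one]⟩

theorem length_mul_mul_simple_add_two_le {y t : W} {i : B} (ht : cs.IsRightInversion y t)
    (hi : cs.IsRightDescent y i) (hne : t ≠ s i) : ℓ (y * t * s i) + 2 ≤ ℓ y := by
  obtain ⟨C, hC, hCy⟩ := cs.exists_isReduced (y * s i)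
  have hy : π (C ++ [i]) = y := by
    rw [wordProd_append, wordProd_singleton, ← hCy, simple_mul_simple_cancel_right]
  obtain ⟨j, hj, hyt⟩ := cs.exists_wordProd_eraseIdx_eq_mul (ω := C ++ [i]) (hy ▸ ht)
  rw [hy] at hyt
  rcases lt_or_ge j C.length with hjC | hjC
  · rw [List.eraseIdx_append_of_lt_length hjC, wordProd_append, wordProd_singleton] at hyt
    rw [← hyt, simple_mul_simple_cancel_right]
    have := cs.length_wordProd_le (C.eraseIdx j)
    have := List.length_eraseIdx_add_one hjC
    have := cs.length_mul_simple y i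
    rw [IsRightDescent] at hi
    rw [IsReduced, ← hCy] at hC
    omega
  · have hjC' : j = C.length := by
      simp only [List.length_append, List.length_singleton] at hj
      omega
    rw [hjC', List.eraseIdx_append_of_length_le le_rfl, Nat.sub_self, List.eraseIdx_cons_zero,
      List.append_nil, ← hCy] at hyt
    exact absurd (mul_left_cancel hyt).symm hne

variable {cs} in
theorem BruhatStep.mul_simple {x y : W} (h : cs.BruhatStep x y) (i : B) :
    ReflTransGen cs.BruhatStep (x * s i) y ∨ ReflTransGen cs.BruhatStep (x * s i) (y * s i) := by
  obtain ⟨t, ht, rfl, hlt⟩ := h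
  rcases cs.length_mul_simple x i with hx | hx
  · by_cases hup : ℓ (x * s i) < ℓ (x * t * s i)
    · have hxt : x * t * s i = x * s i * (s i * t * s i) := by
        simp [mul_assoc, simple_mul_simple_cancel_left]
      exact .inr (.single ⟨_, by simpa [cs.inv_simple] using ht.conj (s i), hxt, hup⟩)
    · left
      by_cases hts : t = s i
      · subst hts
        exact .refl
      · have hdesc : cs.IsRightDescent (x * t) i := by
          have := cs.length_mul_simple_ne (x * t) i
          rw [IsRightDescent]
          omega
        have hinv : cs.IsRightInversion (x * t) t :=
          ⟨ht, by rwa [mul_assoc, ht.mul_self, mul_one]⟩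
        have hlen := cs.length_mul_mul_simple_add_two_le hinv hdesc hts
        have := cs.length_mul_simple (x * t) i
        rw [mul_assoc x, ht.mul_self, mul_one] at hlen
        omega
  · exact .inl (.head ⟨s i, cs.isReflection_simple i, (simple_mul_simple_cancel_right cs i).symm,
      by omega⟩ (.single ⟨t, ht, rfl, hlt⟩))

theorem reflTransGen_bruhatStep_mul_simple {x y : W} (h : ReflTransGen cs.BruhatStep x y)
    (i : B) :
    ReflTransGen cs.BruhatStep (x * s i) y ∨ ReflTransGen cs.BruhatStep (x * s i) (y * s i) := by
  induction h using ReflTransGen.head_induction_on with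
  | refl => exact .inr .refl
  | head hstep hrest ih =>
    rcases hstep.mul_simple i with h | h
    · exact .inl (h.trans hrest)
    · exact ih.imp h.trans h.trans

theorem reflTransGen_bruhatStep_wordProd_of_sublist {ω z : List B} {v : W}
    (hω : IsReducedWordFor cs ω v) (hzω : z.Sublist ω) :
    ReflTransGen cs.BruhatStep (π z) v := by
  induction ω using List.reverseRecOn generalizing z v with
  | nil =>
    obtain ⟨rfl, -⟩ := hω
    rw [List.sublist_nil.mp hzω]
  | append_singleton ω i ih =>
    obtain ⟨rfl, hlen⟩ := hω
    rw [wordProd_append, wordProd_singleton] at hlen ⊢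
    simp only [List.length_append, List.length_singleton] at hlen
    have := cs.length_wordProd_le ω
    have := cs.length_mul_simple (π ω) i
    have hstep : cs.BruhatStep (π ω) (π ω * s i) :=
      ⟨s i, cs.isReflection_simple i, rfl, by omega⟩
    have hred : IsReducedWordFor cs ω (π ω) := ⟨rfl, by omega⟩
    obtain ⟨z, z', rfl, hz, hz'⟩ := List.sublist_append_iff.mp hzω
    rcases List.sublist_singleton.mp hz' with rfl | rfl
    · simpa using (ih hred hz).tail hstep
    · rw [wordProd_append, wordProd_singleton]
      exact (cs.reflTransGen_bruhatStep_mul_simple (ih hred hz) i).elim (·.tail hstep) id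

end CoxeterSystem

/-- For a reduced word `w` of `v`, the diagrammatic R̃-polynomial `𝓡_{u,w}` is nonzero
if and only if `u ≤ v` in the Bruhat order. -/
theorem dR_ne_zero_iff_bruhatLE (cs : CoxeterSystem M W) (u v : W) (w : List B)
    (hw : IsReducedWordFor cs w v) :
    dR cs u w ≠ 0 ↔ BruhatLE cs u v := by
  rw [cs.dR_ne_zero_iff_hasReducedSubword]
  constructor
  · rintro ⟨z, hz, hzu⟩
    exact ⟨w, z, hw, hz, hzu⟩
  · rintro ⟨w', z, hw', hz, hzu, -⟩
    exact cs.hasReducedSubword_of_reflTransGen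
      (hzu ▸ cs.reflTransGen_bruhatStep_wordProd_of_sublist hw' hz) hw
end

section
/- Let (W,S) be a Coxeter system, s ∈ S, and n ∈ ℕ. Let n_s denote the word (s, s, …, s) consisting of n copies of s. Then 𝓡_{e, n_s}(t) = F_n(t), where F_n is the n-th Fibonacci polynomial. -/
open Polynomial

variable {B W : Type*} [Group W] {M : CoxeterMatrix B}

/-- The Fibonacci polynomials: `F 0 = 1`, `F 1 = X`, `F (n+2) = X * F (n+1) + F n`. -/
noncomputable def fibPoly : ℕ → Polynomial ℕ
  | 0 => 1
  | 1 => Polynomial.X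
  | n + 2 => Polynomial.X * fibPoly (n + 1) + fibPoly n

noncomputable def fibShift : ℕ → Polynomial ℕ
  | 0 => 0
  | n + 1 => fibPoly n

lemma key_dRAux_replicate (cs : CoxeterSystem M W) (s : B) (n : ℕ) :
    dRAux cs (List.replicate n s) 1 = fibPoly n ∧
    dRAux cs (List.replicate n s) (cs.simple s) = fibShift n := by
  have hne : cs.simple s ≠ 1 := by
    intro h
    have h1 := cs.length_simple s
    rw [h, cs.length_one] at h1
    exact absurd h1 (by norm_num)
  induction n with
  | zero =>
    refine ⟨by simp [dRAux, fibPoly], ?_⟩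
    simp [dRAux, fibShift, hne]
  | succ n ih =>
    constructor
    · show dRAux cs (s :: List.replicate n s) 1 = _
      rw [dRAux, one_mul, cs.length_one, cs.length_simple, if_neg (by omega),
        ih.1, ih.2]
      cases n with
      | zero => simp [fibShift, fibPoly]
      | succ m => rw [fibShift, fibPoly]; ring
    · show dRAux cs (s :: List.replicate n s) (cs.simple s) = _
      rw [dRAux, cs.simple_mul_simple_self, cs.length_one, cs.length_simple,
        if_pos (by omega), ih.1, fibShift]

/-- For the word consisting of `n` copies of a single letter `s`, the diagrammatic
R̃-polynomial at the identity is the `n`-th Fibonacci polynomial. -/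
theorem dR_one_replicate (cs : CoxeterSystem M W) (s : B) (n : ℕ) :
    dR cs 1 (List.replicate n s) = fibPoly n := by
  rw [dR, List.reverse_replicate]
  exact (key_dRAux_replicate cs s n).1
end

section
/- Let (W,S) be a Coxeter system, s ∈ S, and n ≥ 1. Let n_s denote the word (s, s, …, s) consisting of n copies of s. Then 𝓡_{s, n_s}(t) = F_{n−1}(t), where F_m is the m-th Fibonacci polynomial. -/
open Polynomial

variable {B W : Type*} [Group W] {M : CoxeterMatrix B}

lemma dRAux_replicate (cs : CoxeterSystem M W) (s : B) :
    ∀ n : ℕ, dRAux cs (List.replicate n s) 1 = fibPoly n ∧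
      dRAux cs (List.replicate n s) (cs.simple s) =
        (if n = 0 then 0 else fibPoly (n - 1)) := by
  have hss : cs.simple s * cs.simple s = 1 := cs.simple_mul_simple_self s
  have hlt : cs.length (cs.simple s * cs.simple s) < cs.length (cs.simple s) := by
    rw [hss, cs.length_one, cs.length_simple]; norm_num
  have hnlt : ¬ cs.length ((1:W) * cs.simple s) < cs.length (1:W) := by
    rw [one_mul, cs.length_one]; omega
  intro n
  induction n with
  | zero =>
      constructor
      · simp [dRAux, fibPoly]
      · have hne : cs.simple s ≠ 1 := by
          intro h
          have h2 := cs.length_simple s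
          rw [h, cs.length_one] at h2
          exact absurd h2 (by norm_num)
        simp [dRAux, hne]
  | succ n ih =>
      have h1 : dRAux cs (List.replicate (n+1) s) 1 =
          dRAux cs (List.replicate n s) (cs.simple s) +
            Polynomial.X * dRAux cs (List.replicate n s) 1 := by
        rw [List.replicate_succ]
        simp [dRAux, cs.length_one, cs.length_simple]
      have h2 : dRAux cs (List.replicate (n+1) s) (cs.simple s) =
          dRAux cs (List.replicate n s) 1 := by
        rw [List.replicate_succ]
        simp [dRAux, cs.length_one, cs.length_simple, hss]
      refine ⟨?_, ?_⟩
      · rw [h1, ih.1, ih.2]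
        rcases n with _ | m
        · simp [fibPoly]
        · simp only [if_neg (Nat.succ_ne_zero m), Nat.succ_sub_one]
          rw [fibPoly]; ring
      · rw [h2, ih.1]; simp
/-- For the word consisting of `n ≥ 1` copies of a single letter `s`, the diagrammatic
R̃-polynomial at `s` is the `(n−1)`-st Fibonacci polynomial. -/
theorem dR_simple_replicate (cs : CoxeterSystem M W) (s : B) (n : ℕ) (hn : 1 ≤ n) :
    dR cs (cs.simple s) (List.replicate n s) = fibPoly (n - 1) := by
  obtain ⟨m, rfl⟩ : ∃ m, n = m + 1 := ⟨n - 1, by omega⟩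
  have := (dRAux_replicate cs s (m+1)).2
  simpa [dR, List.reverse_replicate] using this
end

section
/- Let n ≥ 3 and let w_n = (s_2, s_1, s_3, s_2, s_4, s_3, …, s_{n−1}, s_{n−2}) be the word in the generators of S_n formed by concatenating the pairs (s_{i+1}, s_i) for i = 1, 2, …, n−2. Then 𝓡_{e, w_n}(t) = t^{n−2}·F_{n−2}(t), where F_m is the m-th Fibonacci polynomial. (Equivalently, the Kazhdan–Lusztig R̃-polynomial R̃_{e,v_n}(t) = t^{n−2}F_{n−2}(t), where v_n = 34⋯n12.) -/
open Polynomial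

variable {B W : Type*} [Group W] {M : CoxeterMatrix B}

/-- The simple transposition `s_i = (i, i+1)` of `Fin n` (0-based indexing), for
`i : Fin (n - 1)`. -/
def simpleTransposition (n : ℕ) (i : Fin (n - 1)) : Equiv.Perm (Fin n) :=
  Equiv.swap ⟨i.1, by omega⟩ ⟨i.1 + 1, by omega⟩

/-- A UD-word ("up and down" word): a word of the form
`(i₁, …, i_r, t, j₁, …, j_q)` with `i₁ < ⋯ < i_r < t` and `j_q < ⋯ < j₁ < t`,
where either or both of the two blocks may be empty. -/
def IsUDWord {B : Type*} [LT B] (w : List B) : Prop :=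
  ∃ (as : List B) (t : B) (bs : List B),
    w = as ++ t :: bs ∧ as.Pairwise (· < ·) ∧ bs.Pairwise (· > ·) ∧
      (∀ x ∈ as, x < t) ∧ (∀ x ∈ bs, x < t)

/-- A permutation `v` is 321-avoiding if no reduced word of `v` contains three consecutive
letters of the form `s_i, s_{i+1}, s_i` or `s_{i+1}, s_i, s_{i+1}`. -/
def Is321Avoiding {n : ℕ} {M : CoxeterMatrix (Fin (n - 1))}
    (cs : CoxeterSystem M (Equiv.Perm (Fin n))) (v : Equiv.Perm (Fin n)) : Prop :=
  ¬ ∃ (w l r : List (Fin (n - 1))) (i j : Fin (n - 1)),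
      IsReducedWordFor cs w v ∧ w = l ++ i :: j :: i :: r ∧
        ((j : ℕ) = (i : ℕ) + 1 ∨ (i : ℕ) = (j : ℕ) + 1)


/-!
Write `w⁽ᵏ⁾ = s₁ s₀ s₂ s₁ ⋯ s_k s_{k-1}` (0-based letters), so that `w_n = w⁽ⁿ⁻²⁾` and
`w⁽ᵏ⁺¹⁾ = w⁽ᵏ⁾ s_{k+1} s_k`. Peeling off the last two letters with the defining recursion gives
`𝓡_{e,w⁽ᵏ⁺¹⁾} = t 𝓡_{s_k,w⁽ᵏ⁾} + t² 𝓡_{e,w⁽ᵏ⁾}` and `𝓡_{s_{k+1},w⁽ᵏ⁺¹⁾} = t 𝓡_{e,w⁽ᵏ⁾}`: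
every other term is `𝓡_{u,w⁽ᵏ⁾}` for a permutation `u` moving the point `k + 2`, which all letters
of `w⁽ᵏ⁾` fix, so it vanishes. The only length computation needed beyond `ℓ(s_i s_j) = 2` is
`ℓ(s_{k+1} s_k s_{k+1}) = 3`. Hence `A_k = 𝓡_{e,w⁽ᵏ⁾}` satisfies `A_0 = 1`, `A_1 = t²` and
`A_{k+2} = t² (A_{k+1} + A_k)`, the recursion of `t^k F_k`.
-/
namespace CoxeterSystem

variable (cs : CoxeterSystem M W) {i j : B}

theorem length_simple_mul_simple (h : cs.simple i * cs.simple j ≠ 1) :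
    cs.length (cs.simple i * cs.simple j) = 2 := by
  rcases cs.length_mul_simple (cs.simple i) j with h' | h'
  · rw [h', length_simple]
  · rw [length_simple] at h'
    exact absurd (cs.length_eq_zero_iff.mp (by omega)) h

theorem length_simple_mul_simple_mul_simple
    (h : ∀ k, cs.simple i * cs.simple j * cs.simple i ≠ cs.simple k) :
    cs.length (cs.simple i * cs.simple j * cs.simple i) = 3 := by
  have hij : cs.simple i * cs.simple j ≠ 1 := fun h1 => h i (by rw [h1, one_mul])
  rcases cs.length_mul_simple (cs.simple i * cs.simple j) i with h' | h'
  · rw [h', cs.length_simple_mul_simple hij]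
  · rw [cs.length_simple_mul_simple hij] at h'
    have h1 : cs.length (cs.simple i * cs.simple j * cs.simple i) = 1 := by omega
    obtain ⟨k, hk⟩ := cs.length_eq_one_iff.mp h1
    exact absurd hk (h k)

end CoxeterSystem

section DiagrammaticR

variable (cs : CoxeterSystem M W)

theorem dR_one_nil : dR cs 1 [] = 1 := by
  simp [dR, dRAux]

theorem dR_simple_nil (i : B) : dR cs (cs.simple i) [] = 0 := by
  have : cs.simple i ≠ 1 := fun h => by simpa [h] using cs.length_simple i
  simp [dR, dRAux, this]

theorem dR_concat_of_isRightDescent {u : W} {i : B} (w : List B) (h : cs.IsRightDescent u i) :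
    dR cs u (w ++ [i]) = dR cs (u * cs.simple i) w := by
  rw [dR, List.reverse_append, List.reverse_singleton, List.singleton_append, dRAux]
  exact if_pos h

theorem dR_concat_of_not_isRightDescent {u : W} {i : B} (w : List B)
    (h : ¬cs.IsRightDescent u i) :
    dR cs u (w ++ [i]) = dR cs (u * cs.simple i) w + X * dR cs u w := by
  rw [dR, List.reverse_append, List.reverse_singleton, List.singleton_append, dRAux]
  exact if_neg h

theorem dR_eq_zero_of_notMem (H : Subgroup W) {w : List B} (hw : ∀ i ∈ w, cs.simple i ∈ H)
    {u : W} (hu : u ∉ H) : dR cs u w = 0 := by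
  induction w using List.reverseRecOn generalizing u with
  | nil => simp [dR, dRAux, show u ≠ 1 from fun h => hu (h ▸ H.one_mem)]
  | append_singleton w i ih =>
    have hw' : ∀ j ∈ w, cs.simple j ∈ H := fun j hj => hw j (by simp [hj])
    have hui : u * cs.simple i ∉ H := fun h =>
      hu <| (H.mul_mem_cancel_right (hw i (by simp))).mp h
    by_cases hd : cs.IsRightDescent u i
    · rw [dR_concat_of_isRightDescent cs w hd, ih hw' hui]
    · rw [dR_concat_of_not_isRightDescent cs w hd, ih hw' hui, ih hw' hu]
      simp

variable {H : Subgroup W} {w : List B} {a b : B}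

theorem dR_one_append_pair (hw : ∀ i ∈ w, cs.simple i ∈ H) (ha : cs.simple a ∈ H)
    (hb : cs.simple b ∉ H) :
    dR cs 1 (w ++ [b, a]) = X * dR cs (cs.simple a) w + X ^ 2 * dR cs 1 w := by
  have hab : cs.simple a * cs.simple b ∉ H := fun h => hb ((H.mul_mem_cancel_left ha).mp h)
  have hab_desc : ¬cs.IsRightDescent (cs.simple a) b := by
    rw [CoxeterSystem.IsRightDescent,
      cs.length_simple_mul_simple (fun h => hab (h ▸ H.one_mem)), cs.length_simple]
    omega
  rw [show w ++ [b, a] = w ++ [b] ++ [a] by simp,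
    dR_concat_of_not_isRightDescent cs _ (cs.not_isRightDescent_one a), one_mul,
    dR_concat_of_not_isRightDescent cs _ hab_desc,
    dR_concat_of_not_isRightDescent cs _ (cs.not_isRightDescent_one b), one_mul,
    dR_eq_zero_of_notMem cs H hw hab, dR_eq_zero_of_notMem cs H hw hb]
  ring

theorem dR_simple_append_pair (hw : ∀ i ∈ w, cs.simple i ∈ H) (ha : cs.simple a ∈ H)
    (hb : cs.simple b ∉ H) (hbab : cs.simple b * cs.simple a * cs.simple b ∉ H)
    (hlen : cs.length (cs.simple b * cs.simple a * cs.simple b) = 3) :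
    dR cs (cs.simple b) (w ++ [b, a]) = X * dR cs 1 w := by
  have hba : cs.simple b * cs.simple a ∉ H := fun h => hb ((H.mul_mem_cancel_right ha).mp h)
  have hba_desc : ¬cs.IsRightDescent (cs.simple b) a := by
    rw [CoxeterSystem.IsRightDescent,
      cs.length_simple_mul_simple (fun h => hba (h ▸ H.one_mem)), cs.length_simple]
    omega
  have hbab_desc : ¬cs.IsRightDescent (cs.simple b * cs.simple a) b := by
    have hle := cs.length_mul_le (cs.simple b) (cs.simple a)
    rw [cs.length_simple, cs.length_simple] at hle
    rw [CoxeterSystem.IsRightDescent, hlen]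
    omega
  have hbb_desc : cs.IsRightDescent (cs.simple b) b := by
    simp [CoxeterSystem.IsRightDescent, cs.simple_mul_simple_self, cs.length_simple]
  rw [show w ++ [b, a] = w ++ [b] ++ [a] by simp,
    dR_concat_of_not_isRightDescent cs _ hba_desc,
    dR_concat_of_not_isRightDescent cs _ hbab_desc,
    dR_concat_of_isRightDescent cs _ hbb_desc, cs.simple_mul_simple_self,
    dR_eq_zero_of_notMem cs H hw hbab, dR_eq_zero_of_notMem cs H hw hba]
  ring

end DiagrammaticR

section Zigzag

variable {c : ℕ → B}

def zigzagWord (c : ℕ → B) (k : ℕ) : List B :=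
  ((List.range k).map fun j => [c (j + 1), c j]).flatten

theorem zigzagWord_succ (k : ℕ) : zigzagWord c (k + 1) = zigzagWord c k ++ [c (k + 1), c k] := by
  simp [zigzagWord, List.range_succ]

theorem exists_le_of_mem_zigzagWord {k : ℕ} {i : B} (h : i ∈ zigzagWord c k) :
    ∃ j ≤ k, c j = i := by
  simp only [zigzagWord, List.mem_flatten, List.mem_map, List.mem_range] at h
  obtain ⟨_, ⟨j, hj, rfl⟩, hi⟩ := h
  rcases List.mem_pair.mp hi with rfl | rfl
  · exact ⟨j + 1, by omega, rfl⟩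
  · exact ⟨j, by omega, rfl⟩

theorem dR_one_zigzagWord (cs : CoxeterSystem M W) {N : ℕ}
    (hsep : ∀ k < N, ∃ H : Subgroup W, (∀ j ≤ k, cs.simple (c j) ∈ H) ∧
      cs.simple (c (k + 1)) ∉ H ∧
      cs.simple (c (k + 1)) * cs.simple (c k) * cs.simple (c (k + 1)) ∉ H)
    (hlen : ∀ k < N,
      cs.length (cs.simple (c (k + 1)) * cs.simple (c k) * cs.simple (c (k + 1))) = 3)
    {k : ℕ} (hk : k ≤ N) : dR cs 1 (zigzagWord c k) = X ^ k * fibPoly k := by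
  have hletters {k : ℕ} {H : Subgroup W} (hH : ∀ j ≤ k, cs.simple (c j) ∈ H) :
      ∀ i ∈ zigzagWord c k, cs.simple i ∈ H := fun i hi => by
    obtain ⟨j, hj, rfl⟩ := exists_le_of_mem_zigzagWord hi
    exact hH j hj
  have hone {k : ℕ} (hk : k < N) : dR cs 1 (zigzagWord c (k + 1)) =
      X * dR cs (cs.simple (c k)) (zigzagWord c k) + X ^ 2 * dR cs 1 (zigzagWord c k) := by
    obtain ⟨H, hH, hnext, -⟩ := hsep k hk
    rw [zigzagWord_succ, dR_one_append_pair cs (hletters hH) (hH k le_rfl) hnext]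
  have hsimple {k : ℕ} (hk : k < N) :
      dR cs (cs.simple (c (k + 1))) (zigzagWord c (k + 1)) = X * dR cs 1 (zigzagWord c k) := by
    obtain ⟨H, hH, hnext, hbraid⟩ := hsep k hk
    rw [zigzagWord_succ,
      dR_simple_append_pair cs (hletters hH) (hH k le_rfl) hnext hbraid (hlen k hk)]
  induction k using Nat.twoStepInduction with
  | zero => simp [zigzagWord, dR_one_nil, fibPoly]
  | one =>
    rw [hone (by omega)]
    simp [zigzagWord, dR_one_nil, dR_simple_nil, fibPoly, pow_two]
  | more k ih₀ ih₁ =>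
    rw [hone (by omega), hsimple (by omega), ih₀ (by omega), ih₁ (by omega), fibPoly]
    ring

end Zigzag

section SymmetricGroup

open Equiv

variable {n : ℕ} [NeZero (n - 1)] {M : CoxeterMatrix (Fin (n - 1))}
  {cs : CoxeterSystem M (Perm (Fin n))}

theorem simple_ofNat_eq_swap (hs : ∀ i, cs.simple i = simpleTransposition n i) {j : ℕ}
    (hj : j + 1 < n) :
    cs.simple (Fin.ofNat (n - 1) j) = swap ⟨j, by omega⟩ ⟨j + 1, hj⟩ := by
  rw [hs, simpleTransposition]
  simp only [Fin.val_ofNat, Nat.mod_eq_of_lt (show j < n - 1 by omega)]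

theorem simple_mul_simple_mul_simple_ofNat_eq_swap
    (hs : ∀ i, cs.simple i = simpleTransposition n i) {k : ℕ} (hk : k + 2 < n) :
    cs.simple (Fin.ofNat (n - 1) (k + 1)) * cs.simple (Fin.ofNat (n - 1) k) *
      cs.simple (Fin.ofNat (n - 1) (k + 1)) = swap ⟨k + 2, hk⟩ ⟨k, by omega⟩ := by
  rw [simple_ofNat_eq_swap hs (by omega), simple_ofNat_eq_swap hs (by omega)]
  exact swap_mul_swap_mul_swap (by simp only [Ne, Fin.mk.injEq]; omega)
    (by simp only [Ne, Fin.mk.injEq]; omega)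

theorem exists_subgroup_separating_ofNat (hs : ∀ i, cs.simple i = simpleTransposition n i)
    {k : ℕ} (hk : k + 2 < n) :
    ∃ H : Subgroup (Perm (Fin n)), (∀ j ≤ k, cs.simple (Fin.ofNat (n - 1) j) ∈ H) ∧
      cs.simple (Fin.ofNat (n - 1) (k + 1)) ∉ H ∧
      cs.simple (Fin.ofNat (n - 1) (k + 1)) * cs.simple (Fin.ofNat (n - 1) k) *
        cs.simple (Fin.ofNat (n - 1) (k + 1)) ∉ H := by
  refine ⟨MulAction.stabilizer _ (⟨k + 2, hk⟩ : Fin n), fun j hj => ?_, ?_, ?_⟩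
  · rw [MulAction.mem_stabilizer_iff, simple_ofNat_eq_swap hs (by omega), Perm.smul_def,
      swap_apply_of_ne_of_ne (by simp; omega) (by simp; omega)]
  · rw [MulAction.mem_stabilizer_iff, simple_ofNat_eq_swap hs (by omega), Perm.smul_def,
      swap_apply_right]
    simp
  · rw [MulAction.mem_stabilizer_iff, simple_mul_simple_mul_simple_ofNat_eq_swap hs hk,
      Perm.smul_def, swap_apply_left]
    simp

theorem length_simple_mul_simple_mul_simple_ofNat
    (hs : ∀ i, cs.simple i = simpleTransposition n i) {k : ℕ} (hk : k + 2 < n) :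
    cs.length (cs.simple (Fin.ofNat (n - 1) (k + 1)) * cs.simple (Fin.ofNat (n - 1) k) *
      cs.simple (Fin.ofNat (n - 1) (k + 1))) = 3 := by
  refine cs.length_simple_mul_simple_mul_simple fun i h => ?_
  rw [simple_mul_simple_mul_simple_ofNat_eq_swap hs hk, hs, simpleTransposition] at h
  have := congrArg (· ⟨k, by omega⟩) h
  simp only [swap_apply_right, swap_apply_def, Fin.ext_iff] at this
  split_ifs at this <;> simp only at this <;> omega

end SymmetricGroup

/-- Pagliacci's formula: for the reduced word
`w_n = s_2 s_1 s_3 s_2 ⋯ s_{n-1} s_{n-2}` (1-based; here 0-based pairs `(j+1, j)` for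
`j = 0, …, n-3`) of the permutation `v_n = 34⋯n12`, we have
`𝓡_{e,w_n}(t) = t^{n-2} F_{n-2}(t)`. -/
theorem dR_one_pagliacci {n : ℕ} (hn : 3 ≤ n) {M : CoxeterMatrix (Fin (n - 1))}
    (cs : CoxeterSystem M (Equiv.Perm (Fin n)))
    (hs : ∀ i : Fin (n - 1), cs.simple i = simpleTransposition n i)
    (w : List (Fin (n - 1)))
    (hw : w = ((List.range (n - 2)).pmap
        (fun j hj => [(⟨j + 1, by omega⟩ : Fin (n - 1)), (⟨j, by omega⟩ : Fin (n - 1))])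
        (fun j hj => List.mem_range.mp hj)).flatten) :
    dR cs 1 w = Polynomial.X ^ (n - 2) * fibPoly (n - 2) := by
  have : NeZero (n - 1) := ⟨by omega⟩
  have hzigzag : w = zigzagWord (Fin.ofNat (n - 1)) (n - 2) := by
    rw [hw, zigzagWord, List.pmap_eq_map_attach]
    refine congrArg List.flatten
      ((List.map_congr_left fun ⟨j, hj⟩ _ => ?_).trans List.attach_map_val)
    simp only [List.mem_range] at hj
    simp [Fin.ext_iff, Nat.mod_eq_of_lt (show j < n - 1 by omega),
      Nat.mod_eq_of_lt (show j + 1 < n - 1 by omega)]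
  rw [hzigzag]
  exact dR_one_zigzagWord cs (fun k hk => exists_subgroup_separating_ofNat hs (by omega))
    (fun k hk => length_simple_mul_simple_mul_simple_ofNat hs (by omega)) le_rfl
end

section
/- Let v ∈ S_n be a 321-avoiding permutation. Then for every generator s_i, any two reduced words of v contain the same number of occurrences of the letter s_i; that is, the number of occurrences n_v(i) of s_i in a reduced word of v is independent of the choice of reduced word. -/
open Polynomial

variable {B W : Type*} [Group W] {M : CoxeterMatrix B}

/-! Induct on `ℓ v`. Two reduced words of `v` end in right descents `s_a` and `s_b`. If `a = b`,
strip the last letter. If `|a - b| = 1`, then `s_b` is a descent of `v s_a` and `s_a` one of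
`v s_a s_b`, so `v` has a reduced word ending in `s_a s_b s_a`, which 321-avoidance forbids.
If `|a - b| ≥ 2`, then `s_a` and `s_b` commute, so a reduced word `u` of `v s_a s_b` gives reduced
words `u s_b` of `v s_a` and `u s_a` of `v s_b`, and the induction hypothesis at `v s_a` and
`v s_b` connects the two given words. Descents are read off the permutation: `ℓ v` is the number
of inversions of `v`, so `s_i` is a right descent of `v` exactly when `v (i + 1) < v i`. -/

open Finset

namespace Equiv.Perm

variable {α : Type*} [LinearOrder α]

lemma swap_lt_swap_iff_of_covBy {x y p q : α} (hxy : x ⋖ y) (hxy' : (p, q) ≠ (x, y))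
    (hyx : (p, q) ≠ (y, x)) : swap x y p < swap x y q ↔ p < q := by
  have hleft : ∀ c, c ≠ x → (c < y ↔ c < x) := fun c hc =>
    ⟨fun h => (hxy.le_of_lt h).lt_of_ne hc, fun h => h.trans hxy.lt⟩
  have hright : ∀ c, c ≠ y → (x < c ↔ y < c) := fun c hc =>
    ⟨fun h => (hxy.ge_of_gt h).lt_of_ne hc.symm, fun h => hxy.lt.trans h⟩
  simp only [ne_eq, Prod.mk.injEq, not_and] at hxy' hyx
  simp only [swap_apply_def]
  split_ifs <;> simp_all

variable [Fintype α]

def inversions (v : Perm α) : Finset (α × α) :=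
  univ.filter fun p => p.1 < p.2 ∧ v p.2 < v p.1

@[simp]
lemma mem_inversions {v : Perm α} {p : α × α} :
    p ∈ v.inversions ↔ p.1 < p.2 ∧ v p.2 < v p.1 := by
  simp [inversions]

@[simp]
lemma inversions_one : (1 : Perm α).inversions = ∅ := by
  ext
  simpa using le_of_lt

lemma inversions_mul_swap_of_covBy {v : Perm α} {x y : α} (hxy : x ⋖ y) (hv : v x < v y) :
    (v * swap x y).inversions =
      insert (x, y) (v.inversions.map (prodCongr (swap x y) (swap x y)).toEmbedding) := by
  ext ⟨p, q⟩
  simp only [mem_inversions, mul_apply, mem_insert, mem_map_equiv, prodCongr_symm, symm_swap,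
    prodCongr_apply, Prod.map]
  by_cases hpq : (p, q) = (x, y)
  · simp_all [swap_apply_left, swap_apply_right, hxy.lt]
  by_cases hqp : (p, q) = (y, x)
  · simp_all [swap_apply_left, swap_apply_right, hv.not_gt, hxy.lt.not_gt]
  simp [hpq, swap_lt_swap_iff_of_covBy hxy hpq hqp]

lemma card_inversions_mul_swap_of_covBy {v : Perm α} {x y : α} (hxy : x ⋖ y) (hv : v x < v y) :
    #(v * swap x y).inversions = #v.inversions + 1 := by
  rw [inversions_mul_swap_of_covBy hxy hv, card_insert_of_notMem, card_map]
  simp [hxy.lt.not_gt]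

lemma card_inversions_mul_swap_add_one_of_covBy {v : Perm α} {x y : α} (hxy : x ⋖ y)
    (hv : v y < v x) :
    #(v * swap x y).inversions + 1 = #v.inversions := by
  have := card_inversions_mul_swap_of_covBy (v := v * swap x y) hxy (by simpa using hv)
  rwa [mul_assoc, swap_mul_self, mul_one, eq_comm] at this

end Equiv.Perm

section ReducedWords

variable (cs : CoxeterSystem M W)

lemma exists_isReducedWordFor (v : W) : ∃ ω : List B, IsReducedWordFor cs ω v := by
  obtain ⟨ω, hω, rfl⟩ := cs.exists_isReduced v
  exact ⟨ω, rfl, hω.eq.symm⟩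

lemma isReducedWordFor_append_singleton_iff {u : List B} {a : B} {v : W} :
    IsReducedWordFor cs (u ++ [a]) v ↔
      cs.IsRightDescent v a ∧ IsReducedWordFor cs u (v * cs.simple a) := by
  have hprod : cs.wordProd (u ++ [a]) = cs.wordProd u * cs.simple a := by
    simp [cs.wordProd_append]
  constructor
  · rintro ⟨hp, hl⟩
    have hu : cs.wordProd u = v * cs.simple a := by
      rw [← hp, hprod, cs.simple_mul_simple_cancel_right]
    have hle := cs.length_wordProd_le u
    rw [hu] at hle
    rw [List.length_append, List.length_singleton] at hl
    rcases cs.length_mul_simple v a with h | h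
    · omega
    · exact ⟨by rw [cs.isRightDescent_iff]; exact h, hu, by omega⟩
  · rintro ⟨hd, hp, hl⟩
    rw [cs.isRightDescent_iff] at hd
    refine ⟨by rw [hprod, hp, cs.simple_mul_simple_cancel_right], ?_⟩
    rw [List.length_append, List.length_singleton, hl, hd]

end ReducedWords

section SymmetricGroup

open Equiv

variable {n : ℕ}

def lowerPoint (i : Fin (n - 1)) : Fin n := ⟨i, by omega⟩

def upperPoint (i : Fin (n - 1)) : Fin n := ⟨i + 1, by omega⟩

@[simp]
lemma val_lowerPoint (i : Fin (n - 1)) : (lowerPoint i : ℕ) = i := rfl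

@[simp]
lemma val_upperPoint (i : Fin (n - 1)) : (upperPoint i : ℕ) = i + 1 := rfl

lemma lowerPoint_covBy_upperPoint (i : Fin (n - 1)) : lowerPoint i ⋖ upperPoint i := by
  simp [Fin.covBy_iff]

lemma swap_lowerPoint_upperPoint_apply_of_ne {i : Fin (n - 1)} {z : Fin n} (h₁ : (z : ℕ) ≠ i)
    (h₂ : (z : ℕ) ≠ i + 1) :
    swap (lowerPoint i) (upperPoint i) z = z :=
  swap_apply_of_ne_of_ne (Fin.ne_of_val_ne h₁) (Fin.ne_of_val_ne h₂)

lemma exists_apply_upperPoint_lt_of_ne_one {v : Perm (Fin n)} (hv : v ≠ 1) :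
    ∃ i : Fin (n - 1), v (upperPoint i) < v (lowerPoint i) := by
  by_contra! h
  apply hv
  have hmono : StrictMono v := by
    cases n with
    | zero => exact fun p => p.elim0
    | succ m =>
      refine Fin.strictMono_iff_lt_succ.2 fun i => (h i).lt_of_ne ?_
      exact v.injective.ne (lowerPoint_covBy_upperPoint (n := m + 1) i).ne
  exact Equiv.ext (congrFun hmono.eq_id)

variable {M : CoxeterMatrix (Fin (n - 1))} {cs : CoxeterSystem M (Perm (Fin n))}
  (hs : ∀ i : Fin (n - 1), cs.simple i = simpleTransposition n i)

include hs

lemma simple_eq_swap (i : Fin (n - 1)) : cs.simple i = swap (lowerPoint i) (upperPoint i) :=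
  hs i

lemma card_inversions_wordProd_le (ω : List (Fin (n - 1))) :
    #(cs.wordProd ω).inversions ≤ ω.length := by
  induction ω using List.reverseRecOn with
  | nil => simp
  | append_singleton ω i ih =>
    have hcov := lowerPoint_covBy_upperPoint i
    rw [cs.wordProd_append, cs.wordProd_singleton, simple_eq_swap hs, List.length_append,
      List.length_singleton]
    generalize cs.wordProd ω = v at ih ⊢
    rcases lt_or_gt_of_ne (v.injective.ne hcov.ne) with h | h
    · rw [Perm.card_inversions_mul_swap_of_covBy hcov h]
      omega
    · have := Perm.card_inversions_mul_swap_add_one_of_covBy hcov h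
      omega

lemma length_le_card_inversions (v : Perm (Fin n)) : cs.length v ≤ #v.inversions := by
  induction h : #v.inversions using Nat.strong_induction_on generalizing v with
  | _ N ih =>
    by_cases hv : v = 1
    · simp [hv]
    obtain ⟨i, hi⟩ := exists_apply_upperPoint_lt_of_ne_one hv
    have hcard := Perm.card_inversions_mul_swap_add_one_of_covBy (lowerPoint_covBy_upperPoint i) hi
    rw [← simple_eq_swap hs] at hcard
    have := ih _ (by omega) (v * cs.simple i) rfl
    rcases cs.length_mul_simple v i with h | h <;> omega

lemma length_eq_card_inversions (v : Perm (Fin n)) : cs.length v = #v.inversions := by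
  refine (length_le_card_inversions hs v).antisymm ?_
  obtain ⟨ω, hω, rfl⟩ := cs.exists_isReduced v
  exact hω.eq ▸ card_inversions_wordProd_le hs ω

lemma isRightDescent_iff_apply_lt (v : Perm (Fin n)) (i : Fin (n - 1)) :
    cs.IsRightDescent v i ↔ v (upperPoint i) < v (lowerPoint i) := by
  have hcov := lowerPoint_covBy_upperPoint i
  rw [CoxeterSystem.IsRightDescent, length_eq_card_inversions hs, length_eq_card_inversions hs,
    simple_eq_swap hs]
  rcases lt_or_gt_of_ne (v.injective.ne hcov.ne) with h | h
  · rw [Perm.card_inversions_mul_swap_of_covBy hcov h]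
    simp [h.not_gt]
  · have := Perm.card_inversions_mul_swap_add_one_of_covBy hcov h
    simp only [h, iff_true]
    omega

end SymmetricGroup

section Avoiding

open Equiv

variable {n : ℕ} {M : CoxeterMatrix (Fin (n - 1))} {cs : CoxeterSystem M (Perm (Fin n))}

lemma Is321Avoiding.mul_simple {v : Perm (Fin n)} {a : Fin (n - 1)} (h : Is321Avoiding cs v)
    (ha : cs.IsRightDescent v a) : Is321Avoiding cs (v * cs.simple a) := by
  rintro ⟨w, l, r, i, j, hw, rfl, hij⟩
  exact h ⟨_, l, r ++ [a], i, j, (isReducedWordFor_append_singleton_iff cs).2 ⟨ha, hw⟩,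
    by simp, hij⟩

variable (hs : ∀ i : Fin (n - 1), cs.simple i = simpleTransposition n i)

include hs

lemma not_is321Avoiding_of_adjacent_isRightDescent {v : Perm (Fin n)} {a b : Fin (n - 1)}
    (hab : (b : ℕ) = a + 1) (ha : cs.IsRightDescent v a) (hb : cs.IsRightDescent v b) :
    ¬Is321Avoiding cs v := by
  have hba : lowerPoint b = upperPoint a := Fin.ext hab
  have hfix_b : swap (lowerPoint a) (upperPoint a) (upperPoint b) = upperPoint b :=
    swap_lowerPoint_upperPoint_apply_of_ne (by rw [val_upperPoint]; omega)
      (by rw [val_upperPoint]; omega)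
  have hfix_a : swap (lowerPoint b) (upperPoint b) (lowerPoint a) = lowerPoint a :=
    swap_lowerPoint_upperPoint_apply_of_ne (by rw [val_lowerPoint]; omega)
      (by rw [val_lowerPoint]; omega)
  rw [isRightDescent_iff_apply_lt hs] at hb
  rw [hba] at hb hfix_a
  have hb' : cs.IsRightDescent (v * cs.simple a) b := by
    rw [isRightDescent_iff_apply_lt hs] at ha ⊢
    simpa [simple_eq_swap hs, hba, hfix_b] using hb.trans ha
  have ha' : cs.IsRightDescent (v * cs.simple a * cs.simple b) a := by
    rw [isRightDescent_iff_apply_lt hs]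
    simpa [simple_eq_swap hs, hba, hfix_a, hfix_b] using hb
  obtain ⟨u, hu⟩ := exists_isReducedWordFor cs (v * cs.simple a * cs.simple b * cs.simple a)
  have hw : IsReducedWordFor cs (u ++ [a] ++ [b] ++ [a]) v := by
    simp only [isReducedWordFor_append_singleton_iff]
    exact ⟨ha, hb', ha', hu⟩
  exact fun h => h ⟨_, u, [], a, b, hw, by simp, Or.inl hab⟩

lemma isRightDescent_mul_simple_of_far {v : Perm (Fin n)} {a b : Fin (n - 1)}
    (hab : (a : ℕ) + 1 < b ∨ (b : ℕ) + 1 < a) (hb : cs.IsRightDescent v b) :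
    cs.IsRightDescent (v * cs.simple a) b := by
  rw [isRightDescent_iff_apply_lt hs] at hb ⊢
  rwa [Perm.mul_apply, Perm.mul_apply, simple_eq_swap hs,
    swap_lowerPoint_upperPoint_apply_of_ne (by rw [val_upperPoint]; omega)
      (by rw [val_upperPoint]; omega),
    swap_lowerPoint_upperPoint_apply_of_ne (by rw [val_lowerPoint]; omega)
      (by rw [val_lowerPoint]; omega)]

lemma simple_mul_simple_comm_of_far {a b : Fin (n - 1)}
    (hab : (a : ℕ) + 1 < b ∨ (b : ℕ) + 1 < a) :
    cs.simple a * cs.simple b = cs.simple b * cs.simple a := by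
  rw [simple_eq_swap hs, simple_eq_swap hs]
  refine (Perm.disjoint_swap_swap ?_).commute.eq
  simp [Fin.ext_iff]
  omega

lemma exists_isReducedWordFor_of_far {v : Perm (Fin n)} {a b : Fin (n - 1)}
    (hab : (a : ℕ) + 1 < b ∨ (b : ℕ) + 1 < a) (ha : cs.IsRightDescent v a)
    (hb : cs.IsRightDescent v b) :
    ∃ u, IsReducedWordFor cs (u ++ [b]) (v * cs.simple a) ∧
      IsReducedWordFor cs (u ++ [a]) (v * cs.simple b) := by
  obtain ⟨u, hu⟩ := exists_isReducedWordFor cs (v * cs.simple a * cs.simple b)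
  refine ⟨u, (isReducedWordFor_append_singleton_iff cs).2
    ⟨isRightDescent_mul_simple_of_far hs hab hb, hu⟩,
    (isReducedWordFor_append_singleton_iff cs).2
    ⟨isRightDescent_mul_simple_of_far hs hab.symm ha, ?_⟩⟩
  rwa [mul_assoc, ← simple_mul_simple_comm_of_far hs hab, ← mul_assoc]

end Avoiding

theorem count_eq_of_is321Avoiding_general {n : ℕ} {M : CoxeterMatrix (Fin (n - 1))}
    (cs : CoxeterSystem M (Equiv.Perm (Fin n)))
    (hs : ∀ i : Fin (n - 1), cs.simple i = simpleTransposition n i)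
    (v : Equiv.Perm (Fin n)) (h321 : Is321Avoiding cs v)
    (w₁ w₂ : List (Fin (n - 1)))
    (h₁ : IsReducedWordFor cs w₁ v) (h₂ : IsReducedWordFor cs w₂ v)
    (i : Fin (n - 1)) :
    w₁.count i = w₂.count i := by
  induction hN : cs.length v generalizing v w₁ w₂ with
  | zero =>
    rw [List.length_eq_zero_iff.1 (h₁.2.trans hN), List.length_eq_zero_iff.1 (h₂.2.trans hN)]
  | succ N ih =>
    obtain rfl | ⟨u₁, a, rfl⟩ := w₁.eq_nil_or_concat'
    · simp [← h₁.2] at hN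
    obtain rfl | ⟨u₂, b, rfl⟩ := w₂.eq_nil_or_concat'
    · simp [← h₂.2] at hN
    obtain ⟨ha, hu₁⟩ := (isReducedWordFor_append_singleton_iff cs).1 h₁
    obtain ⟨hb, hu₂⟩ := (isReducedWordFor_append_singleton_iff cs).1 h₂
    have hNa : cs.length (v * cs.simple a) = N := by rw [cs.isRightDescent_iff] at ha; omega
    have hNb : cs.length (v * cs.simple b) = N := by rw [cs.isRightDescent_iff] at hb; omega
    have ih_a := ih _ (h321.mul_simple ha) u₁
    have ih_b := ih _ (h321.mul_simple hb) u₂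
    simp only [List.count_append]
    by_cases hab : a = b
    · subst hab
      rw [ih_a u₂ hu₁ hu₂ hNa]
    replace hab : (a : ℕ) ≠ b := Fin.val_ne_of_ne hab
    by_cases hadj : (b : ℕ) = a + 1 ∨ (a : ℕ) = b + 1
    · exact absurd h321 (hadj.elim (not_is321Avoiding_of_adjacent_isRightDescent hs · ha hb)
        (not_is321Avoiding_of_adjacent_isRightDescent hs · hb ha))
    obtain ⟨u, hua, hub⟩ := exists_isReducedWordFor_of_far hs (by omega) ha hb
    rw [ih_a _ hu₁ hua hNa, ih_b _ hu₂ hub hNb, List.count_append, List.count_append]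
    omega

/-- For a 321-avoiding permutation `v`, the number of occurrences of any given letter is
the same in all reduced words of `v`. -/
theorem count_eq_of_is321Avoiding {n : ℕ} (hn : 2 ≤ n) {M : CoxeterMatrix (Fin (n - 1))}
    (cs : CoxeterSystem M (Equiv.Perm (Fin n)))
    (hs : ∀ i : Fin (n - 1), cs.simple i = simpleTransposition n i)
    (v : Equiv.Perm (Fin n)) (h321 : Is321Avoiding cs v)
    (w₁ w₂ : List (Fin (n - 1)))
    (h₁ : IsReducedWordFor cs w₁ v) (h₂ : IsReducedWordFor cs w₂ v)
    (i : Fin (n - 1)) :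
    w₁.count i = w₂.count i :=
  count_eq_of_is321Avoiding_general cs hs v h321 w₁ w₂ h₁ h₂ i
end
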